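/- arXiv:2406.10464 — 3 statements merged into one kernel-verified Lean document; each statement's English description precedes it below -/
import Mathlib

section
/- Let f be a joint probability density on ℝ^p × ℝ^q with everywhere strictly positive marginals f_X and f_Y. Let r : ℝ^q × ℝ^q → [0,∞) be a measurable Markov transition density on ℝ^q that satisfies detailed balance with respect to f_Y, i.e., r(y'|y) f_Y(y) = r(y|y') f_Y(y') for all y, y' ∈ ℝ^q. Define the sandwich transition density k_SA(x'|x) = ∫∫ [f(x',y')/f_Y(y')] r(y'|y) [f(x,y)/f_X(x)] dy dy'. Then k_SA satisfies detailed balance with respect to f_X: for all x, x' ∈ ℝ^p, k_SA(x'|x) f_X(x) = k_SA(x|x') f_X(x'). -/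
open MeasureTheory

/-- Detailed balance of the sandwich transition density with respect to `f_X`,
whenever the middle-step kernel `r` satisfies detailed balance with respect to `f_Y`. -/
theorem stmt_5 (p q : ℕ)
    (f : (Fin p → ℝ) → (Fin q → ℝ) → ℝ)
    (hf_meas : Measurable (Function.uncurry f))
    (hf_nonneg : ∀ x y, 0 ≤ f x y)
    (hf_prob : ∫ z : (Fin p → ℝ) × (Fin q → ℝ), f z.1 z.2 = 1)
    (fX : (Fin p → ℝ) → ℝ) (hfX : ∀ x, fX x = ∫ y : Fin q → ℝ, f x y)
    (fY : (Fin q → ℝ) → ℝ) (hfY : ∀ y, fY y = ∫ x : Fin p → ℝ, f x y)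
    (hfX_pos : ∀ x, 0 < fX x) (hfY_pos : ∀ y, 0 < fY y)
    (r : (Fin q → ℝ) → (Fin q → ℝ) → ℝ)  -- r y' y = r(y'|y)
    (hr_meas : Measurable (Function.uncurry r))
    (hr_nonneg : ∀ y' y, 0 ≤ r y' y)
    (hr_markov : ∀ y, ∫ y' : Fin q → ℝ, r y' y = 1)
    (hr_db : ∀ y y' : Fin q → ℝ, r y' y * fY y = r y y' * fY y')
    (kSA : (Fin p → ℝ) → (Fin p → ℝ) → ℝ)
    (hkSA : ∀ x' x, kSA x' x =
      ∫ y' : Fin q → ℝ, ∫ y : Fin q → ℝ,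
        (f x' y' / fY y') * r y' y * (f x y / fX x)) :
    ∀ x x' : Fin p → ℝ, kSA x' x * fX x = kSA x x' * fX x' := by
  intro x x'
  -- measurability of fY
  have hfY_meas : Measurable fY := by
    have : fY = fun y => ∫ x, f x y := funext hfY
    rw [this]
    exact (hf_meas.stronglyMeasurable.integral_prod_left).measurable
  -- integrability of f c · (else the integral would be 0, contradicting positivity)
  have hf_int : ∀ c, Integrable (f c) := by
    intro c
    by_contra h
    have h0 : (∫ y, f c y) = 0 := integral_undef h
    have := hfX_pos c
    rw [hfX c, h0] at this
    exact lt_irrefl _ this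
  -- integrability of r · b
  have hr_int : ∀ b, Integrable (fun a => r a b) := by
    intro b
    by_contra h
    have h0 : (∫ a, r a b) = 0 := integral_undef h
    have := hr_markov b
    rw [h0] at this
    exact one_ne_zero this.symm
  -- measurability helpers
  have hfa_meas : ∀ c, Measurable (f c) := by
    intro c
    exact hf_meas.comp (measurable_const.prodMk measurable_id)
  have hra_meas : ∀ a, Measurable (fun b => r a b) := by
    intro a
    exact hr_meas.comp (measurable_const.prodMk measurable_id)
  have hrb_meas : ∀ b, Measurable (fun a => r a b) := by
    intro b
    exact hr_meas.comp (measurable_id.prodMk measurable_const)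
  have hG_meas : ∀ c d : Fin p → ℝ, Measurable (Function.uncurry fun a b : Fin q → ℝ =>
      ENNReal.ofReal ((f c a / fY a) * (r a b * f d b))) := by
    intro c d
    exact (((hf_meas.comp (measurable_const.prodMk measurable_fst)).div
      (hfY_meas.comp measurable_fst)).mul
      (hr_meas.mul (hf_meas.comp (measurable_const.prodMk measurable_snd)))).ennreal_ofReal
  have hrf_meas : ∀ (d : Fin p → ℝ),
      Measurable (Function.uncurry fun a b : Fin q → ℝ =>
        ENNReal.ofReal (r a b * f d b)) := by
    intro d
    exact (hr_meas.mul (hf_meas.comp (measurable_const.prodMk measurable_snd))).ennreal_ofReal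
  -- total mass of the "C" integrand is ofReal (fX d), hence finite
  have hC_tot : ∀ d : Fin p → ℝ,
      (∫⁻ a : Fin q → ℝ, ∫⁻ b : Fin q → ℝ, ENNReal.ofReal (r a b * f d b))
        = ENNReal.ofReal (fX d) := by
    intro d
    rw [lintegral_lintegral_swap (hrf_meas d).aemeasurable]
    have : ∀ b : Fin q → ℝ, (∫⁻ a, ENNReal.ofReal (r a b * f d b))
        = ENNReal.ofReal (f d b) := by
      intro b
      have h1 : ∀ a : Fin q → ℝ, ENNReal.ofReal (r a b * f d b)
          = ENNReal.ofReal (r a b) * ENNReal.ofReal (f d b) := fun a =>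
        ENNReal.ofReal_mul (hr_nonneg a b)
      simp_rw [h1]
      rw [lintegral_mul_const _ ((hrb_meas b).ennreal_ofReal),
        ← ofReal_integral_eq_lintegral_ofReal (hr_int b)
          (Filter.Eventually.of_forall fun a => hr_nonneg a b),
        hr_markov b, ENNReal.ofReal_one, one_mul]
    simp_rw [this]
    rw [← ofReal_integral_eq_lintegral_ofReal (hf_int d)
      (Filter.Eventually.of_forall fun b => hf_nonneg d b), ← hfX d]
  have hC_meas : ∀ d : Fin p → ℝ,
      Measurable fun a : Fin q → ℝ => ∫⁻ b, ENNReal.ofReal (r a b * f d b) := by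
    intro d
    exact Measurable.lintegral_prod_right (hrf_meas d)
  have hC_fin : ∀ d : Fin p → ℝ, ∀ᵐ a : Fin q → ℝ,
      (∫⁻ b, ENNReal.ofReal (r a b * f d b)) < ⊤ := by
    intro d
    refine ae_lt_top (hC_meas d) ?_
    rw [hC_tot d]
    exact ENNReal.ofReal_ne_top
  -- inner lintegral factorization
  have hinner : ∀ (c d : Fin p → ℝ) (a : Fin q → ℝ),
      (∫⁻ b, ENNReal.ofReal ((f c a / fY a) * (r a b * f d b)))
        = ENNReal.ofReal (f c a / fY a) * ∫⁻ b, ENNReal.ofReal (r a b * f d b) := by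
    intro c d a
    have h1 : ∀ b : Fin q → ℝ, ENNReal.ofReal ((f c a / fY a) * (r a b * f d b))
        = ENNReal.ofReal (f c a / fY a) * ENNReal.ofReal (r a b * f d b) := fun b =>
      ENNReal.ofReal_mul (div_nonneg (hf_nonneg c a) (hfY_pos a).le)
    simp_rw [h1]
    rw [lintegral_const_mul _ (by
      exact (hrf_meas d).comp (measurable_const.prodMk measurable_id))]
  -- iterated Bochner integral equals toReal of iterated lintegral
  have key : ∀ c d : Fin p → ℝ,
      (∫ a : Fin q → ℝ, ∫ b : Fin q → ℝ, (f c a / fY a) * (r a b * f d b))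
        = (∫⁻ a : Fin q → ℝ, ∫⁻ b : Fin q → ℝ,
            ENNReal.ofReal ((f c a / fY a) * (r a b * f d b))).toReal := by
    intro c d
    have h1 : ∀ a : Fin q → ℝ, (∫ b, (f c a / fY a) * (r a b * f d b))
        = (∫⁻ b, ENNReal.ofReal ((f c a / fY a) * (r a b * f d b))).toReal := by
      intro a
      refine integral_eq_lintegral_of_nonneg_ae
        (Filter.Eventually.of_forall fun b =>
          mul_nonneg (div_nonneg (hf_nonneg c a) (hfY_pos a).le)
            (mul_nonneg (hr_nonneg a b) (hf_nonneg d b))) ?_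
      exact (((hra_meas a).mul (hfa_meas d)).const_mul (f c a / fY a)).aestronglyMeasurable
    simp_rw [h1]
    rw [integral_eq_lintegral_of_nonneg_ae
      (Filter.Eventually.of_forall fun a => ENNReal.toReal_nonneg)
      ((Measurable.lintegral_prod_right (hG_meas c d)).ennreal_toReal.aestronglyMeasurable)]
    congr 1
    refine lintegral_congr_ae ?_
    filter_upwards [hC_fin d] with a ha
    rw [ENNReal.ofReal_toReal]
    rw [hinner c d a]
    exact (ENNReal.mul_lt_top ENNReal.ofReal_lt_top ha).ne
  -- pointwise detailed-balance identity
  have hpoint : ∀ a b : Fin q → ℝ,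
      (f x a / fY a) * (r a b * f x' b) = (f x' b / fY b) * (r b a * f x a) := by
    intro a b
    have hdb := hr_db a b
    have ha := (hfY_pos a).ne'
    have hb := (hfY_pos b).ne'
    field_simp
    linear_combination (-(f x a * f x' b)) * hdb
  -- the lintegral swap
  have hL : (∫⁻ a : Fin q → ℝ, ∫⁻ b : Fin q → ℝ,
        ENNReal.ofReal ((f x' a / fY a) * (r a b * f x b)))
      = (∫⁻ a : Fin q → ℝ, ∫⁻ b : Fin q → ℝ,
        ENNReal.ofReal ((f x a / fY a) * (r a b * f x' b))) := by
    have h1 : ∀ a b : Fin q → ℝ,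
        ENNReal.ofReal ((f x a / fY a) * (r a b * f x' b))
          = ENNReal.ofReal ((f x' b / fY b) * (r b a * f x a)) := by
      intro a b; rw [hpoint a b]
    simp_rw [h1]
    exact (lintegral_lintegral_swap
      (f := fun a b : Fin q → ℝ => ENNReal.ofReal ((f x' b / fY b) * (r b a * f x a)))
      (((hG_meas x' x).comp measurable_swap).aemeasurable)).symm
  -- algebra: multiply kSA by the marginal
  have halg : ∀ c d : Fin p → ℝ, kSA c d * fX d
      = ∫ a : Fin q → ℝ, ∫ b : Fin q → ℝ, (f c a / fY a) * (r a b * f d b) := by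
    intro c d
    rw [hkSA c d, ← integral_mul_const]
    refine integral_congr_ae (Filter.Eventually.of_forall fun a => ?_)
    dsimp only
    rw [← integral_mul_const]
    refine integral_congr_ae (Filter.Eventually.of_forall fun b => ?_)
    dsimp only
    have hd := (hfX_pos d).ne'
    rw [mul_assoc, div_mul_cancel₀ _ hd, mul_assoc]
  rw [halg x' x, halg x x', key x' x, key x x', hL]
end

section
/- Let 𝒴₁, 𝒴₂, 𝒳 be countable sets and let f be a probability mass function on 𝒴₁ × 𝒴₂ × 𝒳 with strictly positive marginal f_X(x) = Σ_{y₁,y₂} f(y₁,y₂,x) for every x, satisfying the conditional independence property f(y₁,y₂,x) · f_X(x) = (Σ_{b} f(y₁,b,x)) · (Σ_{a} f(a,y₂,x)) for all (y₁,y₂,x). Let f₁(y₁|x) = Σ_b f(y₁,b,x)/f_X(x), f₂(y₂|x) = Σ_a f(a,y₂,x)/f_X(x), f_Y(y₁,y₂) = Σ_x f(y₁,y₂,x) (assumed strictly positive), and f_{X|Y}(x|y₁,y₂) = f(y₁,y₂,x)/f_Y(y₁,y₂). Let c₁ : 𝒳 → [0,1] be arbitrary. Consider the ADDA Markov kernel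 on 𝒴₁ × 𝒴₂ × 𝒳 that, from state (y₁,y₂,x), with probability c₁(x) draws y₁' ~ f₁(·|x) and sets y₂' = y₂, and with probability 1 − c₁(x) draws y₂' ~ f₂(·|x) and sets y₁' = y₁, and then draws x' ~ f_{X|Y}(·|y₁',y₂'). Then f is a stationary (invariant) distribution for this kernel: for every (ỹ₁,ỹ₂,x̃), summing the one-step transition probability into (ỹ₁,ỹ₂,x̃) against f over starting states yields f(ỹ₁,ỹ₂,x̃). -/
/-!
In `ℝ≥0∞` every sum can be reordered, so the invariance is a computation there, transported
back to `ℝ` because all terms are nonnegative and `f` is summable. The block update leaves `x`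
unchanged, so for fixed `x` the selection probabilities `c₁ x` and `1 - c₁ x` are constants and
the update is a mixture of two Gibbs steps for `f(· | x)`; by conditional independence each of
them preserves `f(·, ·, x)`, whatever the weights. Summing out `x` leaves the marginal `f_Y`,
and the final Gibbs step for `X` turns `f_Y(y) f(x | y)` back into `f`.
-/

open scoped ENNReal

section Kernel

variable {Y₁ Y₂ X : Type*} [DecidableEq Y₁] [DecidableEq Y₂]

noncomputable def addaKernel (c c' : X → ℝ≥0∞) (p₁ : Y₁ → X → ℝ≥0∞) (p₂ : Y₂ → X → ℝ≥0∞)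
    (q : X → Y₁ → Y₂ → ℝ≥0∞) (s t : Y₁ × Y₂ × X) : ℝ≥0∞ :=
  (c s.2.2 * p₁ t.1 s.2.2 * (if s.2.1 = t.2.1 then 1 else 0)
    + c' s.2.2 * p₂ t.2.1 s.2.2 * (if s.1 = t.1 then 1 else 0)) * q t.2.2 t.1 t.2.1

variable {g : Y₁ → Y₂ → X → ℝ≥0∞} {p₁ : Y₁ → X → ℝ≥0∞} {p₂ : Y₂ → X → ℝ≥0∞}

-- `h₁` says that `p₁ · x` is the law of `Y¹` given `(Y², X) = (y₂, x)` whatever `y₂` is: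
-- this is where conditional independence enters.
theorem tsum_tsum_blockUpdate_mul (c c' : ℝ≥0∞)
    (h₁ : ∀ y₁ y₂ x, p₁ y₁ x * ∑' a, g a y₂ x = g y₁ y₂ x)
    (h₂ : ∀ y₁ y₂ x, p₂ y₂ x * ∑' b, g y₁ b x = g y₁ y₂ x) (a₁ : Y₁) (a₂ : Y₂) (x : X) :
    ∑' y₁, ∑' y₂, (c * p₁ a₁ x * (if y₂ = a₂ then 1 else 0)
      + c' * p₂ a₂ x * (if y₁ = a₁ then 1 else 0)) * g y₁ y₂ x = (c + c') * g a₁ a₂ x := by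
  simp only [add_mul, ENNReal.tsum_add, mul_ite, ite_mul, mul_one, mul_zero, zero_mul,
    tsum_ite_eq]
  rw [ENNReal.tsum_comm (f := fun y₁ y₂ => if y₁ = a₁ then _ else 0)]
  simp only [tsum_ite_eq, ENNReal.tsum_mul_left, mul_assoc, h₁, h₂]

theorem tsum_addaKernel_mul {c c' : X → ℝ≥0∞} {q : X → Y₁ → Y₂ → ℝ≥0∞}
    (hc : ∀ x, c x + c' x = 1)
    (h₁ : ∀ y₁ y₂ x, p₁ y₁ x * ∑' a, g a y₂ x = g y₁ y₂ x)
    (h₂ : ∀ y₁ y₂ x, p₂ y₂ x * ∑' b, g y₁ b x = g y₁ y₂ x)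
    (hq : ∀ x₀ y₁ y₂, q x₀ y₁ y₂ * ∑' x, g y₁ y₂ x = g y₁ y₂ x₀) (t : Y₁ × Y₂ × X) :
    ∑' s, addaKernel c c' p₁ p₂ q s t * g s.1 s.2.1 s.2.2 = g t.1 t.2.1 t.2.2 := by
  obtain ⟨a₁, a₂, x₀⟩ := t
  calc ∑' s, addaKernel c c' p₁ p₂ q s (a₁, a₂, x₀) * g s.1 s.2.1 s.2.2
      = q x₀ a₁ a₂ * ∑' x, ∑' y₁, ∑' y₂, (c x * p₁ a₁ x * (if y₂ = a₂ then 1 else 0)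
          + c' x * p₂ a₂ x * (if y₁ = a₁ then 1 else 0)) * g y₁ y₂ x := by
        rw [← (Equiv.prodAssoc Y₁ Y₂ X).tsum_eq, ENNReal.tsum_prod', ENNReal.tsum_comm]
        simp only [ENNReal.tsum_prod', ← ENNReal.tsum_mul_left, addaKernel, Equiv.prodAssoc_apply]
        exact tsum_congr fun x => tsum_congr fun y₁ => tsum_congr fun y₂ => by ring
    _ = q x₀ a₁ a₂ * ∑' x, g a₁ a₂ x := by
        simp only [tsum_tsum_blockUpdate_mul _ _ h₁ h₂, hc, one_mul]
    _ = g a₁ a₂ x₀ := hq x₀ a₁ a₂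

end Kernel

section Mixture

variable {a b u v w : ℝ} (e₁ e₂ : Prop) [Decidable e₁] [Decidable e₂]

theorem mix_mul_nonneg (ha : 0 ≤ a) (hb : 0 ≤ b) (hu : 0 ≤ u) (hv : 0 ≤ v) (hw : 0 ≤ w) :
    0 ≤ (a * u * (if e₁ then 1 else 0) + b * v * (if e₂ then 1 else 0)) * w := by
  positivity

theorem ofReal_mix_mul (ha : 0 ≤ a) (hb : 0 ≤ b) (hu : 0 ≤ u) (hv : 0 ≤ v) :
    ENNReal.ofReal ((a * u * (if e₁ then 1 else 0) + b * v * (if e₂ then 1 else 0)) * w) =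
      (ENNReal.ofReal a * ENNReal.ofReal u * (if e₁ then 1 else 0)
        + ENNReal.ofReal b * ENNReal.ofReal v * (if e₂ then 1 else 0)) * ENNReal.ofReal w := by
  simp (disch := positivity) only [ENNReal.ofReal_mul, ENNReal.ofReal_add,
    apply_ite ENNReal.ofReal, ENNReal.ofReal_one, ENNReal.ofReal_zero]

end Mixture

theorem ofReal_div_mul_tsum_ofReal {α : Type*} {A B D : ℝ} {φ : α → ℝ} (hA : 0 ≤ A)
    (hD : 0 < D) (hφ : ∀ a, 0 ≤ φ a) (hs : Summable φ) (h : A * ∑' a, φ a = B * D) :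
    ENNReal.ofReal (A / D) * ∑' a, ENNReal.ofReal (φ a) = ENNReal.ofReal B := by
  rw [← ENNReal.ofReal_tsum_of_nonneg hφ hs, ← ENNReal.ofReal_mul (div_nonneg hA hD.le),
    div_mul_eq_mul_div, h, mul_div_cancel_right₀ _ hD.ne']

theorem tsum_eq_of_tsum_ofReal_eq {α : Type*} {φ : α → ℝ} {r : ℝ} (hφ : ∀ a, 0 ≤ φ a)
    (hr : 0 ≤ r) (h : ∑' a, ENNReal.ofReal (φ a) = ENNReal.ofReal r) : ∑' a, φ a = r := by
  rw [← ENNReal.toReal_ofReal hr, ← h, ENNReal.tsum_toReal_eq fun _ => ENNReal.ofReal_ne_top]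
  exact tsum_congr fun a => (ENNReal.toReal_ofReal (hφ a)).symm

theorem stmt_8_general {Y₁ Y₂ X : Type*}
    [DecidableEq Y₁] [DecidableEq Y₂]
    (f : Y₁ → Y₂ → X → ℝ)
    (hf_nonneg : ∀ y₁ y₂ x, 0 ≤ f y₁ y₂ x)
    (hf_prob : ∑' z : Y₁ × Y₂ × X, f z.1 z.2.1 z.2.2 = 1)
    (fX : X → ℝ)
    (hfX_pos : ∀ x, 0 < fX x)
    (fY : Y₁ → Y₂ → ℝ) (hfY : ∀ y₁ y₂, fY y₁ y₂ = ∑' x, f y₁ y₂ x)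
    (hfY_pos : ∀ y₁ y₂, 0 < fY y₁ y₂)
    -- conditional independence of the two latent blocks given X
    (hCI : ∀ y₁ y₂ x, f y₁ y₂ x * fX x = (∑' b, f y₁ b x) * (∑' a, f a y₂ x))
    (c₁ : X → ℝ) (hc₁ : ∀ x, 0 ≤ c₁ x ∧ c₁ x ≤ 1)
    (f₁ : Y₁ → X → ℝ) (hf₁ : ∀ y₁ x, f₁ y₁ x = (∑' b, f y₁ b x) / fX x)
    (f₂ : Y₂ → X → ℝ) (hf₂ : ∀ y₂ x, f₂ y₂ x = (∑' a, f a y₂ x) / fX x)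
    (fXY : X → Y₁ → Y₂ → ℝ) (hfXY : ∀ x y₁ y₂, fXY x y₁ y₂ = f y₁ y₂ x / fY y₁ y₂)
    -- the ADDA one-step transition probability from s = (y₁, y₂, x) to t = (y₁', y₂', x')
    (K : Y₁ × Y₂ × X → Y₁ × Y₂ × X → ℝ)
    (hK : ∀ s t, K s t =
      (c₁ s.2.2 * f₁ t.1 s.2.2 * (if s.2.1 = t.2.1 then (1:ℝ) else 0)
        + (1 - c₁ s.2.2) * f₂ t.2.1 s.2.2 * (if s.1 = t.1 then (1:ℝ) else 0))
      * fXY t.2.2 t.1 t.2.1) :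
    ∀ t : Y₁ × Y₂ × X,
      (∑' s : Y₁ × Y₂ × X, K s t * f s.1 s.2.1 s.2.2) = f t.1 t.2.1 t.2.2 := by
  have hF : Summable fun z : Y₁ × Y₂ × X => f z.1 z.2.1 z.2.2 := by
    by_contra h
    simp [tsum_eq_zero_of_not_summable h] at hf_prob
  have hc₀ x : 0 ≤ c₁ x := (hc₁ x).1
  have hc₀' x : 0 ≤ 1 - c₁ x := sub_nonneg.2 (hc₁ x).2
  have hf₁_nonneg y₁ x : 0 ≤ f₁ y₁ x := by
    rw [hf₁]; exact div_nonneg (tsum_nonneg fun _ => hf_nonneg _ _ _) (hfX_pos x).le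
  have hf₂_nonneg y₂ x : 0 ≤ f₂ y₂ x := by
    rw [hf₂]; exact div_nonneg (tsum_nonneg fun _ => hf_nonneg _ _ _) (hfX_pos x).le
  have hfXY_nonneg x y₁ y₂ : 0 ≤ fXY x y₁ y₂ := by
    rw [hfXY]; exact div_nonneg (hf_nonneg _ _ _) (hfY_pos _ _).le
  have hK_nonneg s t : 0 ≤ K s t := by
    rw [hK]
    exact mix_mul_nonneg _ _ (hc₀ _) (hc₀' _) (hf₁_nonneg _ _) (hf₂_nonneg _ _)
      (hfXY_nonneg _ _ _)
  set g : Y₁ → Y₂ → X → ℝ≥0∞ := fun y₁ y₂ x => ENNReal.ofReal (f y₁ y₂ x)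
  have h₁ y₁ y₂ x : ENNReal.ofReal (f₁ y₁ x) * ∑' a, g a y₂ x = g y₁ y₂ x := by
    rw [hf₁]
    exact ofReal_div_mul_tsum_ofReal (tsum_nonneg fun b => hf_nonneg y₁ b x) (hfX_pos x)
      (fun a => hf_nonneg a y₂ x) (hF.comp_injective (Prod.mk_left_injective (y₂, x)))
      (hCI y₁ y₂ x).symm
  have h₂ y₁ y₂ x : ENNReal.ofReal (f₂ y₂ x) * ∑' b, g y₁ b x = g y₁ y₂ x := by
    rw [hf₂]
    exact ofReal_div_mul_tsum_ofReal (tsum_nonneg fun a => hf_nonneg a y₂ x) (hfX_pos x)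
      (fun b => hf_nonneg y₁ b x)
      (hF.comp_injective ((Prod.mk_right_injective y₁).comp (Prod.mk_left_injective x)))
      (by rw [hCI, mul_comm])
  have hq x₀ y₁ y₂ : ENNReal.ofReal (fXY x₀ y₁ y₂) * ∑' x, g y₁ y₂ x = g y₁ y₂ x₀ := by
    rw [hfXY]
    exact ofReal_div_mul_tsum_ofReal (hf_nonneg y₁ y₂ x₀) (hfY_pos y₁ y₂) (hf_nonneg y₁ y₂)
      (hF.comp_injective ((Prod.mk_right_injective y₁).comp (Prod.mk_right_injective y₂)))
      (by rw [hfY])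
  have hc x : ENNReal.ofReal (c₁ x) + ENNReal.ofReal (1 - c₁ x) = 1 := by
    rw [← ENNReal.ofReal_add (hc₀ x) (hc₀' x), add_sub_cancel, ENNReal.ofReal_one]
  intro t
  refine tsum_eq_of_tsum_ofReal_eq (fun s => mul_nonneg (hK_nonneg s t) (hf_nonneg _ _ _))
    (hf_nonneg _ _ _) ?_
  simp_rw [ENNReal.ofReal_mul (hK_nonneg _ t), hK, ofReal_mix_mul _ _ (hc₀ _) (hc₀' _)
    (hf₁_nonneg _ _) (hf₂_nonneg _ _)]
  exact tsum_addaKernel_mul hc h₁ h₂ hq t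

/-- Invariance of the joint distribution `f` of `(Y¹, Y², X)` under the ADDA
(asynchronous distributed data augmentation) Markov kernel, in the discrete
two-block case. -/
theorem stmt_8 {Y₁ Y₂ X : Type*} [Countable Y₁] [Countable Y₂] [Countable X]
    [DecidableEq Y₁] [DecidableEq Y₂]
    (f : Y₁ → Y₂ → X → ℝ)
    (hf_nonneg : ∀ y₁ y₂ x, 0 ≤ f y₁ y₂ x)
    (hf_prob : ∑' z : Y₁ × Y₂ × X, f z.1 z.2.1 z.2.2 = 1)
    (fX : X → ℝ) (hfX : ∀ x, fX x = ∑' z : Y₁ × Y₂, f z.1 z.2 x)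
    (hfX_pos : ∀ x, 0 < fX x)
    (fY : Y₁ → Y₂ → ℝ) (hfY : ∀ y₁ y₂, fY y₁ y₂ = ∑' x, f y₁ y₂ x)
    (hfY_pos : ∀ y₁ y₂, 0 < fY y₁ y₂)
    -- conditional independence of the two latent blocks given X
    (hCI : ∀ y₁ y₂ x, f y₁ y₂ x * fX x = (∑' b, f y₁ b x) * (∑' a, f a y₂ x))
    (c₁ : X → ℝ) (hc₁ : ∀ x, 0 ≤ c₁ x ∧ c₁ x ≤ 1)
    (f₁ : Y₁ → X → ℝ) (hf₁ : ∀ y₁ x, f₁ y₁ x = (∑' b, f y₁ b x) / fX x)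
    (f₂ : Y₂ → X → ℝ) (hf₂ : ∀ y₂ x, f₂ y₂ x = (∑' a, f a y₂ x) / fX x)
    (fXY : X → Y₁ → Y₂ → ℝ) (hfXY : ∀ x y₁ y₂, fXY x y₁ y₂ = f y₁ y₂ x / fY y₁ y₂)
    -- the ADDA one-step transition probability from s = (y₁, y₂, x) to t = (y₁', y₂', x')
    (K : Y₁ × Y₂ × X → Y₁ × Y₂ × X → ℝ)
    (hK : ∀ s t, K s t =
      (c₁ s.2.2 * f₁ t.1 s.2.2 * (if s.2.1 = t.2.1 then (1:ℝ) else 0)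
        + (1 - c₁ s.2.2) * f₂ t.2.1 s.2.2 * (if s.1 = t.1 then (1:ℝ) else 0))
      * fXY t.2.2 t.1 t.2.1) :
    ∀ t : Y₁ × Y₂ × X,
      (∑' s : Y₁ × Y₂ × X, K s t * f s.1 s.2.1 s.2.2) = f t.1 t.2.1 t.2.2 :=
  stmt_8_general f hf_nonneg hf_prob fX hfX_pos fY hfY hfY_pos hCI c₁ hc₁ f₁ hf₁ f₂ hf₂ fXY hfXY K
    hK
end

section
/- For every a > 0 and every t ∈ ℝ, the Laplace density is a scale mixture of normal densities with exponential mixing: ∫₀^∞ (2πs)^{-1/2} exp(−t²/(2s)) · (a²/2) exp(−a² s/2) ds = (a/2) exp(−a|t|). -/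
/-!
Substituting `s = u²` turns the mixture integral into
`a² / √(2π) ∫₀^∞ exp (-(a²u²/2 + t²/(2u²))) du`. Completing the square, the exponent is
`-(a²/2) (u - k/u)² - a|t|` with `k = |t|/a`. The Cauchy–Schlömilch substitution `w = u - k/u`
maps `(0, ∞)` onto `ℝ` with Jacobian `1 + k/u²`, and the involution `u ↦ k/u` shows that both
summands of this Jacobian contribute equally, so the remaining integral is half a Gaussian
integral over `ℝ`.
-/

open Real MeasureTheory Set

section

variable {E : Type*} [NormedAddCommGroup E] [NormedSpace ℝ E] {k : ℝ}

theorem integral_comp_sq_Ioi (g : ℝ → E) :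
    ∫ u in Ioi 0, (2 * u) • g (u ^ 2) = ∫ s in Ioi 0, g s := by
  simpa [rpow_two, show (2 : ℝ) - 1 = 1 by norm_num] using
    integral_comp_rpow_Ioi_of_pos (g := g) two_pos

theorem hasDerivAt_sub_const_div {u : ℝ} (hu : u ≠ 0) :
    HasDerivAt (fun u : ℝ => u - k / u) (1 + k / u ^ 2) u := by
  simp only [div_eq_mul_inv]
  exact ((hasDerivAt_id' u).sub ((hasDerivAt_inv hu).const_mul k)).congr_deriv (by ring)

theorem strictMonoOn_sub_const_div (hk : 0 ≤ k) :
    StrictMonoOn (fun u : ℝ => u - k / u) (Ioi 0) :=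
  fun x hx y hy hxy => by
    have : k / y ≤ k / x := div_le_div_of_nonneg_left hk hx hxy.le
    dsimp only
    linarith

theorem image_sub_const_div_Ioi (hk : 0 < k) : (fun u : ℝ => u - k / u) '' Ioi 0 = univ := by
  refine eq_univ_of_forall fun w => ?_
  -- the positive root of `u ^ 2 - w * u - k`
  set D := √(w ^ 2 + 4 * k)
  have hD : D ^ 2 = w ^ 2 + 4 * k := sq_sqrt (by positivity)
  have hwD : 0 < w + D := by
    have : |w| < D := by
      rw [← sqrt_sq_eq_abs]; exact sqrt_lt_sqrt (sq_nonneg w) (by linarith)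
    linarith [neg_abs_le w]
  refine ⟨(w + D) / 2, div_pos hwD two_pos, ?_⟩
  field_simp
  linear_combination hD

theorem integral_one_add_div_sq_smul_comp_sub_const_div (hk : 0 < k) (f : ℝ → E) :
    ∫ u in Ioi 0, (1 + k / u ^ 2) • f (u - k / u) = ∫ w, f w := by
  conv_rhs => rw [← setIntegral_univ, ← image_sub_const_div_Ioi hk]
  rw [integral_image_eq_integral_abs_deriv_smul measurableSet_Ioi
      (fun u hu => (hasDerivAt_sub_const_div (ne_of_gt hu)).hasDerivWithinAt)
      (strictMonoOn_sub_const_div hk.le).injOn]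
  refine setIntegral_congr_fun measurableSet_Ioi fun u _ => ?_
  rw [abs_of_pos (by positivity)]

theorem integrableOn_one_add_div_sq_smul_comp_sub_const_div (hk : 0 < k) {f : ℝ → E}
    (hf : Integrable f) :
    IntegrableOn (fun u => (1 + k / u ^ 2) • f (u - k / u)) (Ioi 0) := by
  rw [← integrableOn_univ, ← image_sub_const_div_Ioi hk,
    integrableOn_image_iff_integrableOn_abs_deriv_smul measurableSet_Ioi
      (fun u hu => (hasDerivAt_sub_const_div (ne_of_gt hu)).hasDerivWithinAt)
      (strictMonoOn_sub_const_div hk.le).injOn] at hf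
  refine hf.congr_fun (fun u _ => ?_) measurableSet_Ioi
  dsimp only
  rw [abs_of_pos (by positivity)]

theorem integral_div_sq_smul_comp_const_div (hk : 0 < k) (h : ℝ → E) :
    ∫ u in Ioi 0, (k / u ^ 2) • h (k / u) = ∫ u in Ioi 0, h u := by
  have himage : (fun u : ℝ => k / u) '' Ioi 0 = Ioi 0 := by
    refine Subset.antisymm (image_subset_iff.2 fun u hu => div_pos hk hu) fun u hu =>
      ⟨k / u, div_pos hk hu, div_div_cancel₀ hk.ne'⟩
  have hderiv : ∀ u ∈ Ioi (0 : ℝ),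
      HasDerivWithinAt (fun u => k / u) (-(k / u ^ 2)) (Ioi 0) u := fun u hu => by
      simpa [div_eq_mul_inv] using ((hasDerivAt_inv (ne_of_gt hu)).const_mul k).hasDerivWithinAt
  have hinj : InjOn (fun u : ℝ => k / u) (Ioi 0) := fun x _ y _ hxy =>
    inv_injective (mul_left_cancel₀ hk.ne' (by simpa [div_eq_mul_inv] using hxy))
  conv_rhs =>
    rw [← himage, integral_image_eq_integral_abs_deriv_smul measurableSet_Ioi hderiv hinj]
  refine setIntegral_congr_fun measurableSet_Ioi fun u hu => ?_
  rw [abs_neg, abs_of_pos (div_pos hk (pow_pos hu 2))]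

/-- The Cauchy–Schlömilch substitution. -/
theorem integral_comp_sub_const_div_Ioi_of_even (hk : 0 < k) {f : ℝ → E} (hf : Integrable f)
    (heven : ∀ w, f (-w) = f w) :
    ∫ u in Ioi 0, f (u - k / u) = (1 / 2 : ℝ) • ∫ w, f w := by
  set F := fun u => f (u - k / u)
  have hG := integrableOn_one_add_div_sq_smul_comp_sub_const_div hk hf
  have hweight : ∀ u : ℝ, ‖(1 + k / u ^ 2)⁻¹‖ ≤ 1 := fun u => by
    have : 0 ≤ k / u ^ 2 := by positivity
    rw [norm_inv, Real.norm_of_nonneg (by positivity)]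
    exact inv_le_one_of_one_le₀ (by linarith)
  have hF : IntegrableOn F (Ioi 0) := by
    have : IntegrableOn (fun u => (1 + k / u ^ 2)⁻¹ • (1 + k / u ^ 2) • F u) (Ioi 0) :=
      hG.bdd_smul 1
        (by fun_prop : Measurable fun u : ℝ => (1 + k / u ^ 2)⁻¹).aestronglyMeasurable
        (ae_of_all _ hweight)
    exact this.congr_fun (fun u _ => inv_smul_smul₀ (by positivity) _) measurableSet_Ioi
  -- `u ↦ k / u` swaps the two halves of `(1 + k / u ^ 2) • F u`, since `F (k / u) = F u`
  have hswap : ∫ u in Ioi 0, (k / u ^ 2) • F u = ∫ u in Ioi 0, F u := by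
    rw [← integral_div_sq_smul_comp_const_div hk F]
    refine setIntegral_congr_fun measurableSet_Ioi fun u hu => ?_
    simp only [F, ← heven (u - k / u)]
    congr 2
    field_simp
    ring
  have hsplit := integral_one_add_div_sq_smul_comp_sub_const_div hk f
  simp_rw [add_smul, one_smul] at hsplit
  rw [integral_add hF (hG.sub hF |>.congr_fun (fun u _ => by simp [F, add_smul]) measurableSet_Ioi),
    hswap] at hsplit
  rw [← hsplit]
  module

end

theorem integral_exp_neg_mul_sq_add_div_sq {b c : ℝ} (hb : 0 ≤ b) (hc : 0 < c) :
    ∫ u in Ioi 0, exp (-(c * u ^ 2 + b / u ^ 2)) = √(π / c) / 2 * exp (-(2 * √(b * c))) := by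
  rcases hb.eq_or_lt with rfl | hb
  · simpa using integral_gaussian_Ioi c
  obtain ⟨p, hp, rfl⟩ : ∃ p, 0 < p ∧ c = p ^ 2 :=
    ⟨√c, sqrt_pos.2 hc, (sq_sqrt hc.le).symm⟩
  obtain ⟨q, hq, rfl⟩ : ∃ q, 0 < q ∧ b = q ^ 2 :=
    ⟨√b, sqrt_pos.2 hb, (sq_sqrt hb.le).symm⟩
  have hsq : ∀ u ∈ Ioi (0 : ℝ), exp (-(p ^ 2 * u ^ 2 + q ^ 2 / u ^ 2))
      = exp (-(2 * (q * p))) * exp (-p ^ 2 * (u - q / p / u) ^ 2) := fun u hu => by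
    have hu : u ≠ 0 := ne_of_gt hu
    rw [← exp_add]
    congr 1
    field_simp
    ring
  rw [setIntegral_congr_fun measurableSet_Ioi hsq, integral_const_mul,
    integral_comp_sub_const_div_Ioi_of_even (by positivity) (integrable_exp_neg_mul_sq hc)
      (fun w => by rw [neg_sq]),
    integral_gaussian, ← mul_pow, sqrt_sq (by positivity)]
  simp only [smul_eq_mul]
  ring

/-- The Laplace density as a scale mixture of normal densities with exponential
mixing distribution. -/
theorem stmt_9 (a t : ℝ) (ha : 0 < a) :
    ∫ s in Set.Ioi (0:ℝ),
        (1 / Real.sqrt (2 * Real.pi * s)) * Real.exp (-t ^ 2 / (2 * s)) *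
          (a ^ 2 / 2 * Real.exp (-(a ^ 2) * s / 2))
      = a / 2 * Real.exp (-a * |t|) := by
  rw [← integral_comp_sq_Ioi]
  have hsubst : ∀ u ∈ Ioi (0 : ℝ),
      (2 * u) • ((1 / √(2 * π * u ^ 2)) * exp (-t ^ 2 / (2 * u ^ 2)) *
        (a ^ 2 / 2 * exp (-(a ^ 2) * u ^ 2 / 2)))
      = a ^ 2 / √(2 * π) * exp (-(a ^ 2 / 2 * u ^ 2 + t ^ 2 / 2 / u ^ 2)) := fun u hu => by
    have hexp : exp (-(a ^ 2 / 2 * u ^ 2 + t ^ 2 / 2 / u ^ 2))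
        = exp (-t ^ 2 / (2 * u ^ 2)) * exp (-(a ^ 2) * u ^ 2 / 2) := by
      rw [← exp_add]
      congr 1
      ring
    have hu : 0 < u := hu
    rw [hexp, sqrt_mul (by positivity), sqrt_sq hu.le, smul_eq_mul]
    field_simp
  have hc : √(π / (a ^ 2 / 2)) = √(2 * π) / a := by
    rw [show π / (a ^ 2 / 2) = 2 * π / a ^ 2 by ring, sqrt_div' _ (sq_nonneg a), sqrt_sq ha.le]
  have hbc : 2 * √(t ^ 2 / 2 * (a ^ 2 / 2)) = a * |t| := by
    rw [show t ^ 2 / 2 * (a ^ 2 / 2) = (a * |t| / 2) ^ 2 by rw [div_pow, mul_pow, sq_abs]; ring,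
      sqrt_sq (by positivity)]
    ring
  rw [setIntegral_congr_fun measurableSet_Ioi hsubst, integral_const_mul,
    integral_exp_neg_mul_sq_add_div_sq (by positivity) (by positivity), hc, hbc]
  field_simp
end
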